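/- For a code C ⊆ F_q^n of dimension k and a set S ⊆ [n], there exists a basis B = (b_1; ...; b_k) of C with S ⊆ Supp(b_k^+) if and only if S is a redundant set of coordinates for C. -/

import Mathlib

/-!
If the last epipodal vector of a basis `b` of `C` is nonzero on `S`, every earlier basis vector
vanishes on `S`, so on `S` each codeword is a scalar multiple of `b_k`, which has no zero there:
`S` is redundant. Conversely, pick `j₀ ∈ S` and `c ∈ C` with `c j₀ ≠ 0`. By redundancy every
vector of the hyperplane `{x ∈ C | x j₀ = 0}` vanishes on all of `S`, so a basis of that
hyperplane followed by `c` is a basis of `C` whose last epipodal vector is `c` on `S`.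
-/

open Classical in
/-- The `i`-th epipodal vector of `B`. -/
noncomputable def epipodal {F : Type} [Field F] {k n : ℕ}
    (B : Fin k → Fin n → F) (i : Fin k) : Fin n → F :=
  fun j => if ∃ m, m < i ∧ B m j ≠ 0 then 0 else B i j

/-- The support of a code: the coordinates at which some codeword is nonzero. -/
def codeSupp {F : Type} [Field F] {n : ℕ} (C : Submodule F (Fin n → F)) : Set (Fin n) :=
  {j | ∃ c ∈ C, c j ≠ 0}

/-- A set `S` of coordinates is redundant for `C` if `S ⊆ Supp(C)` and for every
codeword `c` and all `i, j ∈ S`, `c i = 0` iff `c j = 0`. -/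
def Redundant {F : Type} [Field F] {n : ℕ} (C : Submodule F (Fin n → F))
    (S : Set (Fin n)) : Prop :=
  S ⊆ codeSupp C ∧ ∀ c ∈ C, ∀ i ∈ S, ∀ j ∈ S, (c i = 0 ↔ c j = 0)

open Module Submodule

section LinearAlgebra

variable {F V : Type*} [Field F] [AddCommGroup V] [Module F V] [FiniteDimensional F V]

theorem Submodule.exists_linearIndependent_span_eq {m : ℕ} (C : Submodule F V)
    (hC : finrank F C = m) :
    ∃ v : Fin m → V, LinearIndependent F v ∧ span F (Set.range v) = C := by
  let b := finBasisOfFinrankEq F C hC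
  refine ⟨C.subtype ∘ b, b.linearIndependent.map' C.subtype C.ker_subtype, ?_⟩
  rw [Set.range_comp, span_image, b.span_eq, map_top, range_subtype]

theorem Submodule.finrank_inf_ker_add_one {C : Submodule F V}
    (φ : V →ₗ[F] F) {c : V} (hc : c ∈ C) (hφc : φ c ≠ 0) :
    finrank F ↥(C ⊓ LinearMap.ker φ) + 1 = finrank F C := by
  set ψ := φ.comp C.subtype
  have hψ : LinearMap.range ψ = ⊤ := by
    refine LinearMap.range_eq_top.mpr fun x => ⟨(x * (φ c)⁻¹) • ⟨c, hc⟩, ?_⟩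
    simp [ψ, hφc]
  have := ψ.finrank_range_add_finrank_ker
  rw [hψ, finrank_top, finrank_self, LinearMap.ker_comp, ← finrank_map_subtype_eq,
    map_comap_subtype] at this
  omega

theorem Submodule.exists_snoc_basis_of_apply_ne_zero {m : ℕ} {C : Submodule F V}
    (hC : finrank F C = m + 1) (φ : V →ₗ[F] F) {c : V} (hc : c ∈ C) (hφc : φ c ≠ 0) :
    ∃ v : Fin m → V, (∀ i, v i ∈ C ∧ φ (v i) = 0) ∧
      LinearIndependent F (Fin.snoc v c : Fin (m + 1) → V) ∧
      span F (Set.range (Fin.snoc v c : Fin (m + 1) → V)) = C := by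
  obtain ⟨v, hv, hspan⟩ := (C ⊓ LinearMap.ker φ).exists_linearIndependent_span_eq
    (m := m) (by have := finrank_inf_ker_add_one φ hc hφc; omega)
  have hvK : ∀ i, v i ∈ C ⊓ LinearMap.ker φ := fun i => hspan ▸ subset_span ⟨i, rfl⟩
  have hli : LinearIndependent F (Fin.snoc v c : Fin (m + 1) → V) := by
    refine linearIndependent_finSnoc.mpr ⟨hv, fun hcK => hφc ?_⟩
    rw [hspan] at hcK
    exact hcK.2
  refine ⟨v, fun i => hvK i, hli, eq_of_le_of_finrank_le ?_ ?_⟩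
  · rw [Fin.range_snoc, span_le, Set.insert_subset_iff]
    exact ⟨hc, Set.range_subset_iff.mpr fun i => (hvK i).1⟩
  · rw [hC, finrank_span_eq_card hli, Fintype.card_fin]

theorem exists_eq_mul_of_mem_span_insert {ι : Type*} {S : Set ι} {s : Set (ι → F)}
    (hs : ∀ v ∈ s, ∀ j ∈ S, v j = 0) {b x : ι → F} (hx : x ∈ span F (insert b s)) :
    ∃ a : F, ∀ j ∈ S, x j = a * b j := by
  obtain ⟨a, z, hz, rfl⟩ := mem_span_insert.mp hx
  refine ⟨a, fun j hj => ?_⟩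
  have hzj : z ∈ LinearMap.ker (LinearMap.proj j : (ι → F) →ₗ[F] F) :=
    span_le.mpr (fun v hv => hs v hv j hj) hz
  simp_all

end LinearAlgebra

variable {F : Type} [Field F] {n : ℕ}

theorem redundant_of_exists_eq_mul {C : Submodule F (Fin n → F)} {S : Set (Fin n)}
    {b : Fin n → F} (hb : b ∈ C) (hbS : ∀ j ∈ S, b j ≠ 0)
    (h : ∀ x ∈ C, ∃ a : F, ∀ j ∈ S, x j = a * b j) : Redundant C S := by
  refine ⟨fun j hj => ⟨b, hb, hbS j hj⟩, fun x hx i hi j hj => ?_⟩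
  obtain ⟨a, ha⟩ := h x hx
  simp [ha i hi, ha j hj, hbS i hi, hbS j hj]

theorem epipodal_ne_zero_iff {k : ℕ} {B : Fin k → Fin n → F} {i : Fin k} {j : Fin n} :
    epipodal B i j ≠ 0 ↔ (∀ p < i, B p j = 0) ∧ B i j ≠ 0 := by
  unfold epipodal
  split_ifs with h <;> simp_all

theorem epipodal_snoc_last_ne_zero_iff {m : ℕ} {v : Fin m → Fin n → F} {c : Fin n → F}
    {j : Fin n} :
    epipodal (Fin.snoc v c) (Fin.last m) j ≠ 0 ↔ (∀ i, v i j = 0) ∧ c j ≠ 0 := by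
  simp [epipodal_ne_zero_iff, Fin.forall_fin_succ', Fin.castSucc_lt_last]

theorem redundant_span_of_epipodal_last_ne_zero {m : ℕ} {B : Fin (m + 1) → Fin n → F}
    {S : Set (Fin n)} (hB : ∀ j ∈ S, epipodal B (Fin.last m) j ≠ 0) :
    Redundant (span F (Set.range B)) S := by
  rw [← Fin.snoc_init_self B] at hB ⊢
  simp only [epipodal_snoc_last_ne_zero_iff] at hB
  rw [Fin.range_snoc]
  refine redundant_of_exists_eq_mul (subset_span (Set.mem_insert _ _)) (fun j hj => (hB j hj).2)
    fun x hx => exists_eq_mul_of_mem_span_insert ?_ hx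
  rintro _ ⟨i, rfl⟩ j hj
  exact (hB j hj).1 i

theorem Redundant.exists_basis_epipodal_last_ne_zero {m : ℕ} {C : Submodule F (Fin n → F)}
    (hC : finrank F C = m + 1) {S : Set (Fin n)} (hS : Redundant C S) :
    ∃ B : Fin (m + 1) → Fin n → F, LinearIndependent F B ∧ span F (Set.range B) = C ∧
      ∀ j ∈ S, epipodal B (Fin.last m) j ≠ 0 := by
  obtain ⟨hsupp, hiff⟩ := hS
  rcases S.eq_empty_or_nonempty with rfl | ⟨j₀, hj₀⟩
  · obtain ⟨B, hB, hspan⟩ := C.exists_linearIndependent_span_eq hC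
    exact ⟨B, hB, hspan, by simp⟩
  obtain ⟨c, hc, hcj₀⟩ := hsupp hj₀
  obtain ⟨v, hv, hli, hspan⟩ := exists_snoc_basis_of_apply_ne_zero hC (LinearMap.proj j₀) hc hcj₀
  refine ⟨_, hli, hspan, fun j hj => epipodal_snoc_last_ne_zero_iff.mpr ⟨fun i => ?_, ?_⟩⟩
  · exact (hiff _ (hv i).1 j hj j₀ hj₀).mpr (hv i).2
  · exact fun hcj => hcj₀ ((hiff c hc j₀ hj₀ j hj).mpr hcj)

/-- For a `k`-dimensional code `C` and a set `S` of coordinates, there is a basis of `C`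
whose last epipodal vector has support containing `S` iff `S` is redundant for `C`. -/
theorem exists_basis_last_epipodal_iff_redundant {F : Type} [Field F]
    {n k : ℕ} (hk : 0 < k) (C : Submodule F (Fin n → F))
    (hC : Module.finrank F C = k) (S : Set (Fin n)) :
    (∃ B : Fin k → Fin n → F, LinearIndependent F B ∧
        Submodule.span F (Set.range B) = C ∧
        ∀ j ∈ S, epipodal B ⟨k - 1, by omega⟩ j ≠ 0) ↔
      Redundant C S := by
  obtain ⟨m, rfl⟩ : ∃ m, k = m + 1 := ⟨k - 1, by omega⟩
  constructor
  · rintro ⟨B, -, rfl, hB⟩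
    exact redundant_span_of_epipodal_last_ne_zero hB
  · exact Redundant.exists_basis_epipodal_last_ne_zero hC
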